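/- Let Δ(a₀,a₁,a₂,a₃) = a₁²a₂² − 4a₀a₂³ − 4a₁³a₃ − 27a₀²a₃² + 18a₀a₁a₂a₃ be the discriminant of the binary cubic a₀x³ + a₁x²y + a₂xy² + a₃y³. If F : ℂ⁴ → ℂ is a polynomial function on the space of binary cubics that is invariant under the substitution action of SL₂(ℂ) (i.e. F(coefficients of g·f) = F(coefficients of f) for all g ∈ SL₂(ℂ) and all binary cubics f), then there is a univariate polynomial q ∈ ℂ[t] with F = q ∘ Δ. In other words, the ring of SL₂(ℂ)-invariants of binary cubics is generated by the degree-4 discriminant Δ. -/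

import Mathlib

open MvPolynomial

/-- The substitution action of a 2×2 matrix `g = (a b; c d)` on polynomials in two variables:
`(g · f)(x, y) = f(ax + by, cx + dy)`. -/
noncomputable def substAct (g : Matrix (Fin 2) (Fin 2) ℂ) (f : MvPolynomial (Fin 2) ℂ) :
    MvPolynomial (Fin 2) ℂ :=
  aeval (fun i : Fin 2 => C (g i 0) * X 0 + C (g i 1) * X 1) f

/-- The binary cubic `a₀x³ + a₁x²y + a₂xy² + a₃y³` associated to the coefficient vector
`(a₀, a₁, a₂, a₃) ∈ ℂ⁴`. -/
noncomputable def coeffsToCubic (a : Fin 4 → ℂ) : MvPolynomial (Fin 2) ℂ :=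
  C (a 0) * X 0 ^ 3 + C (a 1) * X 0 ^ 2 * X 1 + C (a 2) * X 0 * X 1 ^ 2 + C (a 3) * X 1 ^ 3

/-- The `i`-th coefficient of a binary cubic: the coefficient of the monomial `x^(3-i)·y^i`. -/
noncomputable def cubicCoeff (f : MvPolynomial (Fin 2) ℂ) (i : Fin 4) : ℂ :=
  coeff (Finsupp.single 0 (3 - (i : ℕ)) + Finsupp.single 1 (i : ℕ)) f

/-- The discriminant `Δ = a₁²a₂² − 4a₀a₂³ − 4a₁³a₃ − 27a₀²a₃² + 18a₀a₁a₂a₃` of the binary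
cubic `a₀x³ + a₁x²y + a₂xy² + a₃y³`. -/
def cubicDisc (a : Fin 4 → ℂ) : ℂ :=
  a 1 ^ 2 * a 2 ^ 2 - 4 * a 0 * a 2 ^ 3 - 4 * a 1 ^ 3 * a 3 - 27 * a 0 ^ 2 * a 3 ^ 2 +
    18 * a 0 * a 1 * a 2 * a 3

/-! Over `ℂ` a cubic with `Δ ≠ 0` has a root; moving it to infinity and then completing the
square, an element of `SL₂(ℂ)` brings the cubic to the normal form `x²y - (Δ/4)y³`. An invariant
`F = eval · p` is therefore determined on `{Δ ≠ 0}` by `q(d) = F(x²y - (d/4)y³)`, a polynomial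
in `d`. Since `p` and `q ∘ Δ` agree off the hypersurface `Δ = 0`, the product `Δ · (p - q ∘ Δ)`
vanishes identically, so `p = q ∘ Δ`. -/

lemma cubicCoeff_coeffsToCubic (a : Fin 4 → ℂ) (i : Fin 4) :
    cubicCoeff (coeffsToCubic a) i = a i := by
  fin_cases i <;>
    simp [cubicCoeff, coeffsToCubic, MvPolynomial.X, monomial_mul, monomial_pow, C_mul_monomial,
      coeff_monomial, Finsupp.ext_iff, Fin.forall_fin_two, Finsupp.single_apply]

noncomputable def cubicAct (g : Matrix (Fin 2) (Fin 2) ℂ) (a : Fin 4 → ℂ) : Fin 4 → ℂ :=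
  ![a 0 * g 0 0 ^ 3 + a 1 * g 0 0 ^ 2 * g 1 0 + a 2 * g 0 0 * g 1 0 ^ 2 + a 3 * g 1 0 ^ 3,
    3 * a 0 * g 0 0 ^ 2 * g 0 1 + a 1 * (g 0 0 ^ 2 * g 1 1 + 2 * g 0 0 * g 0 1 * g 1 0)
      + a 2 * (2 * g 0 0 * g 1 0 * g 1 1 + g 0 1 * g 1 0 ^ 2) + 3 * a 3 * g 1 0 ^ 2 * g 1 1,
    3 * a 0 * g 0 0 * g 0 1 ^ 2 + a 1 * (2 * g 0 0 * g 0 1 * g 1 1 + g 0 1 ^ 2 * g 1 0)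
      + a 2 * (g 0 0 * g 1 1 ^ 2 + 2 * g 0 1 * g 1 0 * g 1 1) + 3 * a 3 * g 1 0 * g 1 1 ^ 2,
    a 0 * g 0 1 ^ 3 + a 1 * g 0 1 ^ 2 * g 1 1 + a 2 * g 0 1 * g 1 1 ^ 2 + a 3 * g 1 1 ^ 3]

lemma substAct_coeffsToCubic (g : Matrix (Fin 2) (Fin 2) ℂ) (a : Fin 4 → ℂ) :
    substAct g (coeffsToCubic a) = coeffsToCubic (cubicAct g a) := by
  simp only [substAct, coeffsToCubic, cubicAct, map_add, map_mul, map_pow, aeval_C, aeval_X,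
    Matrix.cons_val_zero, Matrix.cons_val_one, Matrix.head_cons, Matrix.cons_val_two,
    Matrix.tail_cons, Matrix.cons_val_three, map_ofNat,
    MvPolynomial.algebraMap_eq]
  ring

lemma cubicCoeff_substAct_coeffsToCubic (g : Matrix (Fin 2) (Fin 2) ℂ) (a : Fin 4 → ℂ) :
    (fun i => cubicCoeff (substAct g (coeffsToCubic a)) i) = cubicAct g a := by
  simp only [substAct_coeffsToCubic, cubicCoeff_coeffsToCubic]

lemma cubicAct_one (a : Fin 4 → ℂ) : cubicAct 1 a = a := by
  ext i
  fin_cases i <;> simp [cubicAct]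

lemma cubicAct_mul (g h : Matrix (Fin 2) (Fin 2) ℂ) (a : Fin 4 → ℂ) :
    cubicAct (g * h) a = cubicAct h (cubicAct g a) := by
  simp only [cubicAct, Matrix.mul_apply, Fin.sum_univ_two, Matrix.cons_val_zero,
    Matrix.cons_val_one, Matrix.cons_val_two, Matrix.cons_val_three, Matrix.head_cons,
    Matrix.tail_cons, Matrix.vecCons_inj, and_true]
  refine ⟨?_, ?_, ?_, ?_⟩ <;> ring

lemma cubicDisc_cubicAct (g : Matrix (Fin 2) (Fin 2) ℂ) (a : Fin 4 → ℂ) :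
    cubicDisc (cubicAct g a) = g.det ^ 6 * cubicDisc a := by
  simp only [cubicDisc, cubicAct, Matrix.det_fin_two, Matrix.cons_val_zero, Matrix.cons_val_one,
    Matrix.cons_val_two, Matrix.cons_val_three, Matrix.head_cons, Matrix.tail_cons]
  ring

lemma exists_cubic_root {a : Fin 4 → ℂ} (h0 : a 0 ≠ 0) :
    ∃ r : ℂ, a 0 * r ^ 3 + a 1 * r ^ 2 + a 2 * r + a 3 = 0 := by
  have hdeg : (Polynomial.C (a 0) * Polynomial.X ^ 3 + Polynomial.C (a 1) * Polynomial.X ^ 2 +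
      Polynomial.C (a 2) * Polynomial.X + Polynomial.C (a 3)).degree = 3 := by
    compute_degree!
  obtain ⟨r, hr⟩ := Complex.exists_root (by rw [hdeg]; norm_num)
  exact ⟨r, by simpa using hr⟩

noncomputable def cubicNormalForm (d : ℂ) : Fin 4 → ℂ := ![0, 1, 0, -4⁻¹ * d]

lemma cubicDisc_cubicNormalForm (d : ℂ) : cubicDisc (cubicNormalForm d) = d := by
  simp only [cubicDisc, cubicNormalForm, Matrix.cons_val_zero, Matrix.cons_val_one,
    Matrix.cons_val_two, Matrix.cons_val_three, Matrix.head_cons, Matrix.tail_cons]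
  ring

lemma exists_det_eq_one_cubicAct_zero_eq_zero (a : Fin 4 → ℂ) :
    ∃ g : Matrix (Fin 2) (Fin 2) ℂ, g.det = 1 ∧ cubicAct g a 0 = 0 := by
  by_cases h0 : a 0 = 0
  · exact ⟨1, Matrix.det_one, by rwa [cubicAct_one]⟩
  · obtain ⟨r, hr⟩ := exists_cubic_root h0
    exact ⟨!![r, -1; 1, 0], by simp [Matrix.det_fin_two], by simpa [cubicAct] using hr⟩

/-- The matrix is the shear `(1, -a₂/(2a₁); 0, 1)`, which completes the square, times
`diag(a₁⁻¹, a₁)`, which normalises the `x²y` coefficient. -/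
lemma cubicAct_eq_cubicNormalForm_of_zero_eq_zero {a : Fin 4 → ℂ} (h0 : a 0 = 0)
    (h1 : a 1 ≠ 0) :
    cubicAct !![(a 1)⁻¹, -a 2 / 2; 0, a 1] a = cubicNormalForm (cubicDisc a) := by
  simp only [cubicAct, cubicNormalForm, cubicDisc, h0, Matrix.of_apply, Matrix.cons_val',
    Matrix.cons_val_zero, Matrix.cons_val_one, Matrix.cons_val_fin_one, Matrix.vecCons_inj,
    and_true]
  refine ⟨?_, ?_, ?_, ?_⟩ <;> field_simp <;> ring

lemma exists_det_eq_one_cubicAct_eq_cubicNormalForm {a : Fin 4 → ℂ} (hd : cubicDisc a ≠ 0) :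
    ∃ g : Matrix (Fin 2) (Fin 2) ℂ, g.det = 1 ∧ cubicAct g a = cubicNormalForm (cubicDisc a) := by
  obtain ⟨g, hg, hg0⟩ := exists_det_eq_one_cubicAct_zero_eq_zero a
  set b := cubicAct g a
  have hdb : cubicDisc b = cubicDisc a := by simp [b, cubicDisc_cubicAct, hg]
  have hb1 : b 1 ≠ 0 := fun hb1 => hd (by rw [← hdb, cubicDisc, hg0, hb1]; ring)
  refine ⟨g * !![(b 1)⁻¹, -b 2 / 2; 0, b 1], ?_, ?_⟩
  · simp [Matrix.det_fin_two, hg, hb1]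
  · rw [cubicAct_mul, cubicAct_eq_cubicNormalForm_of_zero_eq_zero hg0 hb1, hdb]

lemma MvPolynomial.eq_of_eval_eq_of_eval_ne_zero {R σ : Type*} [CommRing R] [IsDomain R]
    [Infinite R] {p q D : MvPolynomial σ R} (hD : D ≠ 0)
    (h : ∀ x, eval x D ≠ 0 → eval x p = eval x q) : p = q := by
  have hmul : D * (p - q) = 0 := MvPolynomial.funext fun x => by
    by_cases hx : eval x D = 0
    · simp [hx]
    · simp [h x hx]
  exact sub_eq_zero.mp ((mul_eq_zero.mp hmul).resolve_left hD)

lemma MvPolynomial.eval_aeval_polynomial {R σ : Type*} [CommSemiring R] (x : σ → R)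
    (D : MvPolynomial σ R) (q : Polynomial R) :
    eval x (Polynomial.aeval D q) = q.eval (eval x D) := by
  rw [Polynomial.aeval_def, Polynomial.hom_eval₂, ← Polynomial.eval₂_id]
  congr 1
  ext
  simp

noncomputable def cubicDiscPoly : MvPolynomial (Fin 4) ℂ :=
  X 1 ^ 2 * X 2 ^ 2 - 4 * X 0 * X 2 ^ 3 - 4 * X 1 ^ 3 * X 3 - 27 * X 0 ^ 2 * X 3 ^ 2 +
    18 * X 0 * X 1 * X 2 * X 3

lemma eval_cubicDiscPoly (a : Fin 4 → ℂ) : eval a cubicDiscPoly = cubicDisc a := by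
  simp [cubicDiscPoly, cubicDisc]

lemma cubicDiscPoly_ne_zero : cubicDiscPoly ≠ 0 := fun h => by
  simpa [eval_cubicDiscPoly, cubicDisc_cubicNormalForm] using congrArg (eval (cubicNormalForm 1)) h

noncomputable def restrictCubicNormalForm (p : MvPolynomial (Fin 4) ℂ) : Polynomial ℂ :=
  aeval ![0, 1, 0, Polynomial.C (-4⁻¹) * Polynomial.X] p

lemma eval_restrictCubicNormalForm (p : MvPolynomial (Fin 4) ℂ) (d : ℂ) :
    (restrictCubicNormalForm p).eval d = eval (cubicNormalForm d) p := by
  rw [restrictCubicNormalForm, aeval_def, polynomial_eval_eval₂]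
  congr 1
  · ext
    simp
  · ext i
    fin_cases i <;> simp [cubicNormalForm]

/-- Every polynomial function on the space of binary cubics that is invariant under the
substitution action of `SL₂(ℂ)` is a univariate polynomial in the degree-4 discriminant `Δ`:
the ring of `SL₂(ℂ)`-invariants of binary cubics is generated by `Δ`. -/
theorem binary_cubic_invariants_generated_by_discriminant (F : (Fin 4 → ℂ) → ℂ)
    (hpoly : ∃ p : MvPolynomial (Fin 4) ℂ, ∀ a, F a = eval a p)
    (hinv : ∀ (g : Matrix.SpecialLinearGroup (Fin 2) ℂ) (a : Fin 4 → ℂ),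
      F (fun i => cubicCoeff (substAct g.val (coeffsToCubic a)) i) = F a) :
    ∃ q : Polynomial ℂ, ∀ a : Fin 4 → ℂ, F a = q.eval (cubicDisc a) := by
  obtain ⟨p, hp⟩ := hpoly
  refine ⟨restrictCubicNormalForm p, fun a => ?_⟩
  rw [hp, ← eval_cubicDiscPoly, ← eval_aeval_polynomial]
  refine congrArg (eval a) (eq_of_eval_eq_of_eval_ne_zero cubicDiscPoly_ne_zero fun b hb => ?_)
  rw [eval_cubicDiscPoly] at hb
  obtain ⟨g, hg, hgb⟩ := exists_det_eq_one_cubicAct_eq_cubicNormalForm hb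
  have hFb : F (cubicNormalForm (cubicDisc b)) = F b := by
    simpa only [cubicCoeff_substAct_coeffsToCubic, hgb] using hinv ⟨g, hg⟩ b
  rw [eval_aeval_polynomial, eval_cubicDiscPoly, eval_restrictCubicNormalForm, ← hp, ← hp, hFb]
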